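/- For all natural numbers a, b, c: the sum over i from 0 to c of C(i,a)·C(i,b) equals the sum over j ≥ 0 of C(c+j+1, a+b+1)·C(a,j)·C(b,j). -/

import Mathlib

/-!
Vandermonde's identity expands `C(n+j, a+b) = Σ_l C(j,l) C(n,a+b-l)`, and the inner sum
`Σ_j C(a,j) C(b,j) C(j,l) = C(a,l) C(a+b-l, a)` is again Vandermonde's identity. The resulting
`Σ_l C(a,l) C(n,a+b-l) C(a+b-l,a)` counts pairs of an `a`-set and a `b`-set in an `n`-set by
their union (of size `a+b-l`), so `C(n,a) C(n,b) = Σ_j C(n+j, a+b) C(a,j) C(b,j)`.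
Summing over `n ≤ c` with the hockey-stick identity gives the theorem.
-/

open Finset

namespace Nat

theorem choose_mul_choose_eq_choose_mul_choose_sub {a j : ℕ} (l : ℕ) (hja : j ≤ a) :
    a.choose j * j.choose l = a.choose l * (a - l).choose (a - j) := by
  rcases le_or_gt l j with hlj | hjl
  · rw [choose_mul hlj, choose_symm_of_eq_add (by omega : a - l = j - l + (a - j))]
  · rcases le_or_gt l a with hla | hal
    · rw [choose_eq_zero_of_lt hjl, choose_eq_zero_of_lt (by omega : a - l < a - j), mul_zero,
        mul_zero]
    · rw [choose_eq_zero_of_lt hjl, choose_eq_zero_of_lt hal, mul_zero, zero_mul]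

theorem sum_range_choose_mul_choose_mul_choose (a b l : ℕ) :
    ∑ j ∈ range (a + 1), a.choose j * b.choose j * j.choose l
      = a.choose l * (a - l + b).choose a := by
  calc ∑ j ∈ range (a + 1), a.choose j * b.choose j * j.choose l
      = a.choose l * ∑ j ∈ range (a + 1), (a - l).choose (a - j) * b.choose j := by
        rw [mul_sum]
        refine sum_congr rfl fun j hj => ?_
        rw [mul_right_comm, choose_mul_choose_eq_choose_mul_choose_sub l
          (mem_range_succ_iff.1 hj)]
        ring
    _ = a.choose l * (a - l + b).choose a := by
        rw [add_choose_eq, ← Finset.Nat.sum_antidiagonal_swap,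
          Finset.Nat.sum_antidiagonal_eq_sum_range_succ_mk]
        rfl

theorem choose_mul_choose_eq_sum_range (n a b : ℕ) :
    n.choose a * n.choose b
      = ∑ l ∈ range (a + b + 1), a.choose l * (n.choose (a + b - l) * (a + b - l).choose a) := by
  have hvanish : ∀ l ∈ range (a + b + 1), l ∉ range (b + 1) →
      a.choose l * (n.choose (a + b - l) * (a + b - l).choose a) = 0 := by
    intro l _ hl
    rw [mem_range_succ_iff, not_le] at hl
    rcases le_or_gt l a with hla | hal
    · rw [choose_eq_zero_of_lt (by omega : a + b - l < a), mul_zero, mul_zero]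
    · rw [choose_eq_zero_of_lt hal, zero_mul]
  rw [← sum_subset (range_subset_range.2 (by omega)) hvanish]
  calc n.choose a * n.choose b
      = n.choose a * (a + (n - a)).choose b := by
        rcases le_or_gt a n with han | hna
        · rw [Nat.add_sub_cancel' han]
        · rw [choose_eq_zero_of_lt hna, zero_mul, zero_mul]
    _ = ∑ l ∈ range (b + 1), a.choose l * (n.choose (a + b - l) * (a + b - l).choose a) := by
        rw [add_choose_eq, Finset.Nat.sum_antidiagonal_eq_sum_range_succ_mk, mul_sum]
        refine sum_congr rfl fun l hl => ?_
        have hlb := mem_range_succ_iff.1 hl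
        rw [choose_mul (by omega : a ≤ a + b - l), (by omega : a + b - l - a = b - l)]
        ring

theorem choose_mul_choose_eq_sum_range_add_choose (n a b : ℕ) :
    n.choose a * n.choose b
      = ∑ j ∈ range (a + 1), (n + j).choose (a + b) * a.choose j * b.choose j := by
  calc n.choose a * n.choose b
      = ∑ l ∈ range (a + b + 1), n.choose (a + b - l) * (a.choose l * (a - l + b).choose a) := by
        rw [choose_mul_choose_eq_sum_range]
        refine sum_congr rfl fun l _ => ?_
        rcases le_or_gt l a with hla | hal
        · rw [(by omega : a - l + b = a + b - l)]
          ring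
        · rw [choose_eq_zero_of_lt hal]
          ring
    _ = ∑ l ∈ range (a + b + 1), ∑ j ∈ range (a + 1),
          n.choose (a + b - l) * (a.choose j * b.choose j * j.choose l) := by
        simp only [← mul_sum, sum_range_choose_mul_choose_mul_choose]
    _ = ∑ j ∈ range (a + 1), (n + j).choose (a + b) * a.choose j * b.choose j := by
        rw [sum_comm]
        refine sum_congr rfl fun j _ => ?_
        rw [add_comm n, add_choose_eq, Finset.Nat.sum_antidiagonal_eq_sum_range_succ
          (fun l m => j.choose l * n.choose m), sum_mul, sum_mul]
        refine sum_congr rfl fun l _ => ?_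
        ring

theorem sum_range_add_choose_of_le {j k : ℕ} (hjk : j ≤ k) (c : ℕ) :
    ∑ i ∈ range (c + 1), (i + j).choose k = (c + j + 1).choose (k + 1) := by
  induction c with
  | zero =>
    rw [sum_range_one, zero_add, choose_succ_succ, choose_eq_zero_of_lt (by omega : j < k + 1),
      add_zero]
  | succ c ih =>
    rw [sum_range_succ, ih, add_right_comm c 1 j, choose_succ_succ (c + j + 1), add_comm]

end Nat

/-- The sum over `i` from `0` to `c` of `C(i,a)·C(i,b)` equals the sum over `j ≥ 0`
(finite, since terms vanish for `j > min a b`) of `C(c+j+1, a+b+1)·C(a,j)·C(b,j)`. -/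
theorem stmt1 (a b c : ℕ) :
    ∑ i ∈ Finset.range (c + 1), i.choose a * i.choose b
    = ∑ j ∈ Finset.range (min a b + 1),
        (c + j + 1).choose (a + b + 1) * a.choose j * b.choose j := by
  have hvanish : ∀ j ∈ range (a + 1), j ∉ range (min a b + 1) →
      (c + j + 1).choose (a + b + 1) * a.choose j * b.choose j = 0 := by
    intro j hj hjm
    simp only [mem_range] at hj hjm
    rw [Nat.choose_eq_zero_of_lt (by omega : b < j), mul_zero]
  calc ∑ i ∈ range (c + 1), i.choose a * i.choose b
      = ∑ j ∈ range (a + 1), (∑ i ∈ range (c + 1), (i + j).choose (a + b))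
          * a.choose j * b.choose j := by
        simp only [Nat.choose_mul_choose_eq_sum_range_add_choose, sum_mul]
        exact sum_comm
    _ = ∑ j ∈ range (a + 1), (c + j + 1).choose (a + b + 1) * a.choose j * b.choose j :=
        sum_congr rfl fun j hj => by
          rw [Nat.sum_range_add_choose_of_le (by have := mem_range_succ_iff.1 hj; omega)]
    _ = _ := (sum_subset (range_subset_range.2 (by omega)) hvanish).symm
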